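/- For uniform cubic (degree 3) cardinal B-splines with spacing h, the quadrature rule supported on the 7 points consisting of the interior knots and midpoints of the knot-spans inside supp(B_i), with weights h·[1/105, 3/35, 5/21, 1/3, 5/21, 3/35, 1/105], exactly reproduces ∫ B_i B_j dζ for all j with |j - i| ≤ 3. -/

import Mathlib

/-
The substitution `ζ = h (t + i)` turns `∫ B_i B_j` into `h ∫₀⁴ N3 t · N3 (t - k)` with
`k = j - i`. On each knot span `[m, m + 1]` this integrand is a polynomial of degree at most 6,
so the closed 7-point Newton–Cotes rule, exact up to degree 7, integrates it exactly. Both sides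
of the identity thereby become finite combinations of values of `N3` at rational points, and
these agree for each of the seven offsets `|k| ≤ 3`.
-/

open MeasureTheory

/-- The standard cubic cardinal B-spline with knots `0,1,2,3,4`. -/
noncomputable def N3 (t : ℝ) : ℝ :=
  if 0 ≤ t ∧ t ≤ 1 then t ^ 3 / 6
  else if 1 ≤ t ∧ t ≤ 2 then (-3 * t ^ 3 + 12 * t ^ 2 - 12 * t + 4) / 6
  else if 2 ≤ t ∧ t ≤ 3 then
    (-3 * (4 - t) ^ 3 + 12 * (4 - t) ^ 2 - 12 * (4 - t) + 4) / 6
  else if 3 ≤ t ∧ t ≤ 4 then (4 - t) ^ 3 / 6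
  else 0

/-- Uniform cubic cardinal B-spline with spacing `h`: the translate by `i·h`
of `N3(·/h)`, supported on `[i·h, (i+4)·h]`. -/
noncomputable def B3 (h : ℝ) (i : ℤ) (ζ : ℝ) : ℝ := N3 (ζ / h - (i : ℝ))

open Polynomial Set

noncomputable def newtonCotes7 (f : ℝ → ℝ) (a b : ℝ) : ℝ :=
  (b - a) / 840 * ∑ r : Fin 7, ![41, 216, 27, 272, 27, 216, 41] r * f (a + r * (b - a) / 6)

theorem newtonCotes7_eq (f : ℝ → ℝ) (a b : ℝ) :
    newtonCotes7 f a b = (b - a) / 840 * (41 * f a + 216 * f (a + (b - a) / 6)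
      + 27 * f (a + 2 * (b - a) / 6) + 272 * f (a + 3 * (b - a) / 6)
      + 27 * f (a + 4 * (b - a) / 6) + 216 * f (a + 5 * (b - a) / 6) + 41 * f b) := by
  rw [newtonCotes7, Fin.sum_univ_seven]
  simp only [Matrix.cons_val]
  norm_num

theorem newtonCotes7_congr {f g : ℝ → ℝ} {a b : ℝ} (hfg : EqOn f g (uIcc a b)) :
    newtonCotes7 f a b = newtonCotes7 g a b := by
  refine congrArg _ (Finset.sum_congr rfl fun r _ => congrArg _ (hfg ?_))
  have hr₀ : (0 : ℝ) ≤ r := Nat.cast_nonneg _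
  have hr₆ : (r : ℝ) ≤ 6 := by exact_mod_cast Nat.lt_succ_iff.mp r.isLt
  rw [mem_uIcc]
  rcases le_total a b with hab | hab
  · left; constructor <;> nlinarith
  · right; constructor <;> nlinarith

theorem integral_pow_eq_newtonCotes7 {n : ℕ} (hn : n ≤ 7) (a b : ℝ) :
    ∫ x in a..b, x ^ n = newtonCotes7 (· ^ n) a b := by
  rw [integral_pow, newtonCotes7_eq]
  interval_cases n <;> field_simp <;> ring

theorem integral_eval_eq_newtonCotes7 {p : ℝ[X]} (hp : p.natDegree ≤ 7) (a b : ℝ) :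
    ∫ x in a..b, p.eval x = newtonCotes7 p.eval a b := by
  have hsum (x : ℝ) : p.eval x = ∑ n ∈ Finset.range 8, p.coeff n * x ^ n :=
    eval_eq_sum_range' (Nat.lt_succ_of_le hp) x
  calc ∫ x in a..b, p.eval x
      = ∑ n ∈ Finset.range 8, p.coeff n * ∫ x in a..b, x ^ n := by
        simp_rw [hsum]
        rw [intervalIntegral.integral_finsetSum fun n _ =>
          Continuous.intervalIntegrable (by fun_prop) a b]
        simp only [intervalIntegral.integral_const_mul]
    _ = ∑ n ∈ Finset.range 8, p.coeff n * newtonCotes7 (· ^ n) a b :=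
        Finset.sum_congr rfl fun n hn => by
          rw [integral_pow_eq_newtonCotes7 (Nat.lt_succ_iff.mp (Finset.mem_range.mp hn))]
    _ = newtonCotes7 p.eval a b := by
        simp only [hsum, newtonCotes7_eq, Finset.sum_range_succ, Finset.sum_range_zero]
        ring

noncomputable def N3piece : ℤ → ℝ[X]
  | 0 => C (1 / 6) * X ^ 3
  | 1 => C (1 / 6) * (-3 * X ^ 3 + 12 * X ^ 2 - 12 * X + 4)
  | 2 => C (1 / 6) * (-3 * (4 - X) ^ 3 + 12 * (4 - X) ^ 2 - 12 * (4 - X) + 4)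
  | 3 => C (1 / 6) * (4 - X) ^ 3
  | _ => 0

theorem natDegree_N3piece_le (m : ℤ) : (N3piece m).natDegree ≤ 3 := by
  unfold N3piece
  split <;> compute_degree!

theorem N3_eq_zero_of_nonpos {t : ℝ} (ht : t ≤ 0) : N3 t = 0 := by
  obtain rfl | ht := ht.eq_or_lt
  · norm_num [N3]
  · unfold N3; grind

theorem N3_eq_zero_of_four_le {t : ℝ} (ht : 4 ≤ t) : N3 t = 0 := by
  obtain rfl | ht := ht.eq_or_lt
  · norm_num [N3]
  · unfold N3; grind

theorem N3piece_eq_zero {m : ℤ} (hm : m < 0 ∨ 4 ≤ m) : N3piece m = 0 := by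
  unfold N3piece; split <;> first | rfl | omega

theorem N3_eq_eval_N3piece {m : ℤ} {t : ℝ} (ht : t ∈ Icc (m : ℝ) (m + 1)) :
    N3 t = (N3piece m).eval t := by
  obtain ⟨hmt, htm⟩ := ht
  rcases lt_or_ge m 0 with hm | hm
  · rw [N3piece_eq_zero (.inl hm), eval_zero, N3_eq_zero_of_nonpos]
    linarith [show (m : ℝ) + 1 ≤ 0 by exact_mod_cast hm]
  rcases lt_or_ge m 4 with hm' | hm'
  · rcases hmt.eq_or_lt with rfl | hmt
    · interval_cases m <;> norm_num [N3, N3piece]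
    rcases htm.eq_or_lt with rfl | htm
    · interval_cases m <;> norm_num [N3, N3piece]
    interval_cases m <;>
      simp only [N3piece, eval_mul, eval_C, eval_add, eval_sub, eval_neg, eval_ofNat, eval_pow,
        eval_X] <;>
      unfold N3 <;> grind
  · rw [N3piece_eq_zero (.inr hm'), eval_zero, N3_eq_zero_of_four_le]
    linarith [show (4 : ℝ) ≤ m by exact_mod_cast hm']

theorem integral_eq_newtonCotes7_of_eqOn {f : ℝ → ℝ} {p : ℝ[X]} (hp : p.natDegree ≤ 7)
    {a b : ℝ} (hf : EqOn f p.eval (uIcc a b)) :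
    ∫ x in a..b, f x = newtonCotes7 f a b := by
  rw [intervalIntegral.integral_congr hf, integral_eval_eq_newtonCotes7 hp, newtonCotes7_congr hf]

theorem eqOn_N3_mul_N3_sub (k m : ℤ) :
    EqOn (fun t => N3 t * N3 (t - k)) (N3piece m * (N3piece (m - k)).comp (X - C (k : ℝ))).eval
      (uIcc m (m + 1)) := by
  intro t ht
  rw [uIcc_of_le (by linarith)] at ht
  have hshift : t - k ∈ Icc ((m - k : ℤ) : ℝ) ((m - k : ℤ) + 1) := by
    push_cast; constructor <;> linarith [ht.1, ht.2]
  simp only [eval_mul, eval_comp, eval_sub, eval_X, eval_C]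
  rw [N3_eq_eval_N3piece ht, N3_eq_eval_N3piece hshift]

theorem natDegree_N3piece_mul_comp_le (k m : ℤ) :
    (N3piece m * (N3piece (m - k)).comp (X - C (k : ℝ))).natDegree ≤ 6 := by
  refine natDegree_mul_le_of_le (n := 3) (natDegree_N3piece_le m) (natDegree_comp_le.trans ?_)
  rw [natDegree_X_sub_C, mul_one]
  exact natDegree_N3piece_le _

theorem integral_N3_mul_N3_sub_eq_sum_newtonCotes7 (k : ℤ) :
    ∫ t in (0 : ℝ)..4, N3 t * N3 (t - k) =
      ∑ m ∈ Finset.range 4, newtonCotes7 (fun t => N3 t * N3 (t - k)) m (m + 1) := by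
  have hspan (m : ℕ) := eqOn_N3_mul_N3_sub k m
  push_cast at hspan
  have hsum := intervalIntegral.sum_integral_adjacent_intervals (μ := volume)
    (f := fun t => N3 t * N3 (t - k)) (a := fun m : ℕ => (m : ℝ)) (n := 4) fun m _ => by
      push_cast
      exact (intervalIntegrable_congr ((hspan m).mono uIoc_subset_uIcc)).mpr
        ((Polynomial.continuous _).intervalIntegrable _ _)
  push_cast at hsum
  rw [← hsum]
  exact Finset.sum_congr rfl fun m _ => integral_eq_newtonCotes7_of_eqOn
    ((natDegree_N3piece_mul_comp_le k m).trans (by norm_num)) (hspan m)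

theorem integral_B3_mul_B3 (h : ℝ) (i j : ℤ) :
    ∫ ζ, B3 h i ζ * B3 h j ζ = |h| * ∫ t in (0 : ℝ)..4, N3 t * N3 (t - (j - i : ℤ)) := by
  have hsupp : ∀ t ∉ Ioc (0 : ℝ) 4, N3 t * N3 (t - (j - i : ℤ)) = 0 := fun t ht => by
    rw [mem_Ioc, not_and_or, not_lt, not_le] at ht
    rcases ht with ht | ht
    · rw [N3_eq_zero_of_nonpos ht, zero_mul]
    · rw [N3_eq_zero_of_four_le ht.le, zero_mul]
  calc ∫ ζ, B3 h i ζ * B3 h j ζ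
      = |h| * ∫ y, N3 (y - i) * N3 (y - j) :=
        Measure.integral_comp_div (fun y => N3 (y - i) * N3 (y - j)) h
    _ = |h| * ∫ y, N3 y * N3 (y - (j - i : ℤ)) := by
        rw [← integral_sub_right_eq_self (fun y => N3 y * N3 (y - (j - i : ℤ))) (i : ℝ)]
        congr 2 with y
        push_cast
        ring_nf
    _ = |h| * ∫ t in (0 : ℝ)..4, N3 t * N3 (t - (j - i : ℤ)) := by
        rw [intervalIntegral.integral_of_le zero_le_four,
          setIntegral_eq_integral_of_forall_compl_eq_zero hsupp]

theorem B3_intCast_add_mul {h : ℝ} (hh : h ≠ 0) (i j : ℤ) (c : ℝ) :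
    B3 h j ((i + c) * h) = N3 (c - (j - i : ℤ)) := by
  rw [B3, mul_div_cancel_right₀ _ hh]
  push_cast
  ring_nf

theorem quadrature_N3_sub_eq_integral {k : ℤ} (hk : |k| ≤ 3) :
    1/105 * N3 (1/2 - k) + 3/35 * N3 (1 - k) + 5/21 * N3 (3/2 - k) + 1/3 * N3 (2 - k)
      + 5/21 * N3 (5/2 - k) + 3/35 * N3 (3 - k) + 1/105 * N3 (7/2 - k)
      = ∫ t in (0 : ℝ)..4, N3 t * N3 (t - k) := by
  rw [integral_N3_mul_N3_sub_eq_sum_newtonCotes7]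
  obtain ⟨hk₁, hk₂⟩ := abs_le.mp hk
  interval_cases k
  all_goals simp only [newtonCotes7_eq, Finset.sum_range_succ, Finset.sum_range_zero]
  -- normalising the nodes to rational literals first keeps unfolding `N3` cheap
  all_goals norm_num
  all_goals norm_num [N3]

/-- Weighted quadrature, 7 points (interior knots and midpoints inside `supp B_i`),
weights `h·[1/105, 3/35, 5/21, 1/3, 5/21, 3/35, 1/105]`, exactly reproduces
`∫ B_i B_j` for `|j-i| ≤ 3`. -/
theorem stmt7 (h : ℝ) (hh : 0 < h) (i j : ℤ) (hij : |j - i| ≤ 3) :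
    h * (1/105) * B3 h j (((i : ℝ) + 1/2) * h)
      + h * (3/35) * B3 h j (((i : ℝ) + 1) * h)
      + h * (5/21) * B3 h j (((i : ℝ) + 3/2) * h)
      + h * (1/3) * B3 h j (((i : ℝ) + 2) * h)
      + h * (5/21) * B3 h j (((i : ℝ) + 5/2) * h)
      + h * (3/35) * B3 h j (((i : ℝ) + 3) * h)
      + h * (1/105) * B3 h j (((i : ℝ) + 7/2) * h)
      = ∫ ζ : ℝ, B3 h i ζ * B3 h j ζ := by
  rw [integral_B3_mul_B3, abs_of_pos hh, ← quadrature_N3_sub_eq_integral hij]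
  simp only [B3_intCast_add_mul hh.ne']
  ring
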